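/- Let K ⊂ ℝⁿ be an open convex cone containing {x ∈ ℝⁿ : xᵢ ≥ 0 for all i, x ≠ 0}, and set L := ℝⁿ∖(K ∪ −K). Let E ⊂ ℝⁿ be a set such that a − b ∈ L for all a, b ∈ E with a ≠ b. Let s(x) := x₁ + … + xₙ and let π : ℝⁿ → Z be the orthogonal projection onto the hyperplane Z := {x : s(x) = 0}. Then π restricted to E is injective, and the function g : π(E) → ℝ defined by g(π(a)) := s(a) for a ∈ E is Lipschitz, with a Lipschitz constant depending only on K; in particular E is the graph over π(E) of a Lipschitz function. -/

import Mathlib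

/-!
Write `𝟙 = (1,…,1)`, so that `s(x) = ⟪𝟙, x⟫` and `x = (s(x)/n) 𝟙 + π x`. Since `K` is open and
contains `𝟙`, it contains a ball `B(𝟙, ε)`. If `|s(x)| > (n/ε) ‖π x‖`, then with `t = s(x)/n`
the vector `𝟙 + t⁻¹ π x` lies in that ball, so `x = t (𝟙 + t⁻¹ π x)` lies in `K` or in `-K`.
Hence `|s(x)| ≤ (n/ε) ‖π x‖` for every `x ∈ L`, and applying this to differences `a - b` of
points of `E` gives both the injectivity of `π` on `E` and the Lipschitz bound.
-/

/-- The hyperplane `Z = {x : Σᵢ xᵢ = 0} ⊂ ℝⁿ`, i.e. the orthogonal complement of the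
span of `(1,…,1)`. -/
noncomputable def Zhyper (n : ℕ) : Submodule ℝ (EuclideanSpace ℝ (Fin n)) :=
  (Submodule.span ℝ {(WithLp.toLp 2 (fun _ => 1 : Fin n → ℝ) : EuclideanSpace ℝ (Fin n))})ᗮ

open Metric
open scoped InnerProductSpace

variable {F : Type*} [NormedAddCommGroup F]

lemma smul_add_mem_union_neg_of_ball_subset [NormedSpace ℝ F] {K : Set F}
    (hKcone : ∀ x ∈ K, ∀ t : ℝ, 0 < t → t • x ∈ K) {v p : F} {ε t : ℝ}
    (hball : ball v ε ⊆ K) (hp : ‖p‖ < ε * |t|) : t • v + p ∈ K ∪ -K := by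
  have ht : t ≠ 0 := by
    rintro rfl
    simp only [abs_zero, mul_zero] at hp
    exact (norm_nonneg p).not_gt hp
  have hw : v + t⁻¹ • p ∈ K := by
    refine hball ?_
    rw [mem_ball, dist_eq_norm, add_sub_cancel_left, norm_smul, norm_inv, Real.norm_eq_abs,
      inv_mul_lt_iff₀ (abs_pos.mpr ht), mul_comm]
    exact hp
  have hx : t • v + p = t • (v + t⁻¹ • p) := by
    rw [smul_add, smul_smul, mul_inv_cancel₀ ht, one_smul]
  rcases ht.lt_or_gt with hneg | hpos
  · right
    rw [Set.mem_neg, hx, ← neg_smul]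
    exact hKcone _ hw _ (neg_pos.mpr hneg)
  · left
    rw [hx]
    exact hKcone _ hw _ hpos

section InnerProductSpace

variable [InnerProductSpace ℝ F]

lemma exists_abs_inner_le_mul_norm_orthogonalProjectionOnto {K : Set F} (hKopen : IsOpen K)
    (hKcone : ∀ x ∈ K, ∀ t : ℝ, 0 < t → t • x ∈ K) {v : F} (hv : v ∈ K) :
    ∃ c : ℝ, 0 ≤ c ∧ ∀ x ∉ K ∪ -K,
      |⟪v, x⟫_ℝ| ≤ c * ‖(ℝ ∙ v)ᗮ.orthogonalProjectionOnto x‖ := by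
  obtain ⟨ε, hε, hball⟩ := isOpen_iff.mp hKopen v hv
  refine ⟨‖v‖ ^ 2 / ε, by positivity, fun x hx => ?_⟩
  by_contra! hlt
  set p := (ℝ ∙ v)ᗮ.orthogonalProjectionOnto x
  have hvpos : 0 < ‖v‖ ^ 2 := by
    refine pow_pos (norm_pos_iff.mpr ?_) 2
    rintro rfl
    simp at hlt
  have hdecomp : (⟪v, x⟫_ℝ / ‖v‖ ^ 2) • v + (p : F) = x := by
    have h := Submodule.starProjection_add_starProjection_orthogonal (K := ℝ ∙ v) x
    rwa [Submodule.starProjection_singleton] at h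
  refine hx (hdecomp ▸ smul_add_mem_union_neg_of_ball_subset hKcone hball ?_)
  rw [Submodule.norm_coe, abs_div, abs_of_pos hvpos, mul_div_assoc', lt_div_iff₀ hvpos]
  rw [div_mul_eq_mul_div, div_lt_iff₀ hε] at hlt
  linarith

lemma injOn_orthogonalProjectionOnto_of_abs_inner_le {K E : Set F} {v : F} {c : ℝ}
    (hbound : ∀ x ∉ K ∪ -K, |⟪v, x⟫_ℝ| ≤ c * ‖(ℝ ∙ v)ᗮ.orthogonalProjectionOnto x‖)
    (hE : ∀ a ∈ E, ∀ b ∈ E, a ≠ b → a - b ∉ K ∪ -K) :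
    Set.InjOn (ℝ ∙ v)ᗮ.orthogonalProjectionOnto E := by
  intro a ha b hb hab
  by_contra hne
  have hproj : (ℝ ∙ v)ᗮ.orthogonalProjectionOnto (a - b) = 0 := by
    rw [map_sub, hab, sub_self]
  have hinner : ⟪v, a - b⟫_ℝ = 0 := by
    simpa [hproj] using hbound _ (hE a ha b hb hne)
  have hmem : a - b ∈ (ℝ ∙ v)ᗮ := Submodule.mem_orthogonal_singleton_iff_inner_right.mpr hinner
  refine hne (sub_eq_zero.mp ?_)
  rw [← Submodule.starProjection_eq_self_iff.mpr hmem, Submodule.starProjection_apply,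
    hproj, Submodule.coe_zero]

lemma abs_inner_sub_le_of_abs_inner_le {K E : Set F} {v : F} {c : ℝ}
    (hbound : ∀ x ∉ K ∪ -K, |⟪v, x⟫_ℝ| ≤ c * ‖(ℝ ∙ v)ᗮ.orthogonalProjectionOnto x‖)
    (hE : ∀ a ∈ E, ∀ b ∈ E, a ≠ b → a - b ∉ K ∪ -K) :
    ∀ a ∈ E, ∀ b ∈ E, |⟪v, a⟫_ℝ - ⟪v, b⟫_ℝ| ≤
      c * ‖(ℝ ∙ v)ᗮ.orthogonalProjectionOnto a - (ℝ ∙ v)ᗮ.orthogonalProjectionOnto b‖ := by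
  intro a ha b hb
  rcases eq_or_ne a b with rfl | hne
  · simp
  · rw [← inner_sub_right, ← map_sub]
    exact hbound _ (hE a ha b hb hne)

end InnerProductSpace

def oneVec (n : ℕ) : EuclideanSpace ℝ (Fin n) := WithLp.toLp 2 fun _ => 1

lemma inner_oneVec_left {n : ℕ} (x : EuclideanSpace ℝ (Fin n)) :
    ⟪oneVec n, x⟫_ℝ = ∑ i, x i := by
  simp [PiLp.inner_apply, oneVec]

lemma oneVec_ne_zero {n : ℕ} (hn : n ≠ 0) : oneVec n ≠ 0 := by
  intro h
  simpa [oneVec] using congrArg (· ⟨0, Nat.pos_of_ne_zero hn⟩) h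

theorem graph_lemma_general {n : ℕ} (K : Set (EuclideanSpace ℝ (Fin n)))
    (hKopen : IsOpen K)
    (hKcone : ∀ x ∈ K, ∀ t : ℝ, 0 < t → t • x ∈ K)
    (hKpos : {x : EuclideanSpace ℝ (Fin n) | (∀ i, 0 ≤ x i) ∧ x ≠ 0} ⊆ K) :
    ∃ c : ℝ, 0 ≤ c ∧ ∀ E : Set (EuclideanSpace ℝ (Fin n)),
      (∀ a ∈ E, ∀ b ∈ E, a ≠ b → a - b ∉ K ∪ (-K)) →
      Set.InjOn (fun x => Submodule.orthogonalProjectionOnto (Zhyper n) x) E ∧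
      ∀ a ∈ E, ∀ b ∈ E,
        |(∑ i, a i) - ∑ i, b i| ≤
          c * ‖Submodule.orthogonalProjectionOnto (Zhyper n) a - Submodule.orthogonalProjectionOnto (Zhyper n) b‖ := by
  obtain ⟨c, hc, hbound⟩ : ∃ c : ℝ, 0 ≤ c ∧ ∀ x ∉ K ∪ -K,
      |⟪oneVec n, x⟫_ℝ| ≤ c * ‖Submodule.orthogonalProjectionOnto (Zhyper n) x‖ := by
    rcases eq_or_ne n 0 with rfl | hn
    · exact ⟨0, le_rfl, fun x _ => by simp [Subsingleton.elim x 0]⟩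
    · exact exists_abs_inner_le_mul_norm_orthogonalProjectionOnto hKopen hKcone
        (hKpos ⟨fun _ => zero_le_one, oneVec_ne_zero hn⟩)
  refine ⟨c, hc, fun E hE => ⟨injOn_orthogonalProjectionOnto_of_abs_inner_le hbound hE, ?_⟩⟩
  have hlip := abs_inner_sub_le_of_abs_inner_le hbound hE
  simp only [inner_oneVec_left] at hlip
  exact hlip

/-- The graph lemma inside the proof of **Lemma 2.1**: if `E ⊂ ℝⁿ` satisfies the `K`-cone
condition for an open convex cone `K ⊇ {x ≥ 0, x ≠ 0}`, then the orthogonal projection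
`π` onto the hyperplane `Z = {Σ xᵢ = 0}` is injective on `E`, and `E` is the graph over
`π(E)` of a function `g(π a) = Σᵢ aᵢ` which is Lipschitz with constant depending only on
`K`. -/
theorem graph_lemma {n : ℕ} (K : Set (EuclideanSpace ℝ (Fin n)))
    (hKopen : IsOpen K) (hKconv : Convex ℝ K)
    (hKcone : ∀ x ∈ K, ∀ t : ℝ, 0 < t → t • x ∈ K)
    (hKpos : {x : EuclideanSpace ℝ (Fin n) | (∀ i, 0 ≤ x i) ∧ x ≠ 0} ⊆ K) :
    ∃ c : ℝ, 0 ≤ c ∧ ∀ E : Set (EuclideanSpace ℝ (Fin n)),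
      (∀ a ∈ E, ∀ b ∈ E, a ≠ b → a - b ∉ K ∪ (-K)) →
      Set.InjOn (fun x => Submodule.orthogonalProjectionOnto (Zhyper n) x) E ∧
      ∀ a ∈ E, ∀ b ∈ E,
        |(∑ i, a i) - ∑ i, b i| ≤
          c * ‖Submodule.orthogonalProjectionOnto (Zhyper n) a - Submodule.orthogonalProjectionOnto (Zhyper n) b‖ :=
  graph_lemma_general K hKopen hKcone hKpos
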